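/- arXiv:2604.18238 — 3 statements merged into one kernel-verified Lean document; each statement's English description precedes it below -/
import Mathlib

section
/- For measurable functions A₀, A₁, B₀, B₁ : Λ → ℝ with values in [−1,1] and a probability measure ρ on Λ, the pointwise bound |A₀(λ)B₀(λ) + A₀(λ)B₁(λ) + A₁(λ)B₀(λ) − A₁(λ)B₁(λ)| ≤ 2 holds for all λ, and hence |∫(A₀B₀ + A₀B₁ + A₁B₀ − A₁B₁) dρ| ≤ 2. -/
open MeasureTheory

/-- Pointwise CHSH bound and its integrated form (Bell 1971). -/
theorem pointwise_and_integrated_chsh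
    {Λ : Type*} [MeasurableSpace Λ]
    (ρ : Measure Λ) [IsProbabilityMeasure ρ]
    (A₀ A₁ B₀ B₁ : Λ → ℝ)
    (hA₀ : Measurable A₀) (hA₁ : Measurable A₁)
    (hB₀ : Measurable B₀) (hB₁ : Measurable B₁)
    (hA₀b : ∀ l, A₀ l ∈ Set.Icc (-1 : ℝ) 1) (hA₁b : ∀ l, A₁ l ∈ Set.Icc (-1 : ℝ) 1)
    (hB₀b : ∀ l, B₀ l ∈ Set.Icc (-1 : ℝ) 1) (hB₁b : ∀ l, B₁ l ∈ Set.Icc (-1 : ℝ) 1) :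
    (∀ l, |A₀ l * B₀ l + A₀ l * B₁ l + A₁ l * B₀ l - A₁ l * B₁ l| ≤ 2) ∧
      |∫ l, (A₀ l * B₀ l + A₀ l * B₁ l + A₁ l * B₀ l - A₁ l * B₁ l) ∂ρ| ≤ 2 := by
  have hpt : ∀ l, |A₀ l * B₀ l + A₀ l * B₁ l + A₁ l * B₀ l - A₁ l * B₁ l| ≤ 2 := by
    intro l
    obtain ⟨ha0, ha0'⟩ := hA₀b l
    obtain ⟨ha1, ha1'⟩ := hA₁b l
    obtain ⟨hb0, hb0'⟩ := hB₀b l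
    obtain ⟨hb1, hb1'⟩ := hB₁b l
    rw [abs_le]
    constructor <;> nlinarith [mul_nonneg (sub_nonneg.2 ha0') (sub_nonneg.2 hb0'),
      mul_nonneg (sub_nonneg.2 ha0) (sub_nonneg.2 hb0),
      mul_nonneg (sub_nonneg.2 ha0') (sub_nonneg.2 hb1'),
      mul_nonneg (sub_nonneg.2 ha0) (sub_nonneg.2 hb1),
      mul_nonneg (sub_nonneg.2 ha1') (sub_nonneg.2 hb0'),
      mul_nonneg (sub_nonneg.2 ha1) (sub_nonneg.2 hb0),
      mul_nonneg (sub_nonneg.2 ha1') (sub_nonneg.2 hb1),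
      mul_nonneg (sub_nonneg.2 ha1) (sub_nonneg.2 hb1'),
      mul_nonneg (sub_nonneg.2 ha0') (sub_nonneg.2 hb1),
      mul_nonneg (sub_nonneg.2 ha0) (sub_nonneg.2 hb1'),
      mul_nonneg (sub_nonneg.2 ha1') (sub_nonneg.2 hb0),
      mul_nonneg (sub_nonneg.2 ha1) (sub_nonneg.2 hb0')]
  refine ⟨hpt, ?_⟩
  have hmeas : Measurable fun l => A₀ l * B₀ l + A₀ l * B₁ l + A₁ l * B₀ l - A₁ l * B₁ l :=
    (((hA₀.mul hB₀).add (hA₀.mul hB₁)).add (hA₁.mul hB₀)).sub (hA₁.mul hB₁)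
  have hint : Integrable (fun l => A₀ l * B₀ l + A₀ l * B₁ l + A₁ l * B₀ l - A₁ l * B₁ l) ρ := by
    apply Integrable.mono' (integrable_const (2 : ℝ)) hmeas.aestronglyMeasurable
    exact Filter.Eventually.of_forall fun l => by simpa using hpt l
  calc |∫ l, (A₀ l * B₀ l + A₀ l * B₁ l + A₁ l * B₀ l - A₁ l * B₁ l) ∂ρ|
      ≤ ∫ l, |A₀ l * B₀ l + A₀ l * B₁ l + A₁ l * B₀ l - A₁ l * B₁ l| ∂ρ :=
        by simpa [Real.norm_eq_abs] using norm_integral_le_integral_norm (μ := ρ) (fun l => A₀ l * B₀ l + A₀ l * B₁ l + A₁ l * B₀ l - A₁ l * B₁ l)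
    _ ≤ ∫ _, (2 : ℝ) ∂ρ := integral_mono hint.abs (integrable_const 2)
        (fun l => hpt l)
    _ = 2 := by simp
end

section
/- Combining the Equivalence Theorem with the CHSH bound: any dynamical local hidden-variable model—joint probabilities given by P(a,b|x,y) = ∫∫∫ P_A(a|x,λ,λ_A') P_B(b|y,λ,λ_B') dT_A(λ_A'|λ,x) dT_B(λ_B'|λ,y) dρ(λ) with ρ independent of (x,y), kernels T_A, T_B depending only on the local setting, and outcomes in {±1}—has correlators satisfying |E(x₀,y₀) + E(x₀,y₁) + E(x₁,y₀) − E(x₁,y₁)| ≤ 2. -/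
open MeasureTheory

private lemma chsh_pointwise {a a' b b' : ℝ}
    (ha : |a| ≤ 1) (ha' : |a'| ≤ 1) (hb : |b| ≤ 1) (hb' : |b'| ≤ 1) :
    |a * b + a * b' + a' * b - a' * b'| ≤ 2 := by
  have h1 : |a * b + a * b' + a' * b - a' * b'| ≤ |a| * |b + b'| + |a'| * |b - b'| := by
    calc |a * b + a * b' + a' * b - a' * b'| = |a * (b + b') + a' * (b - b')| := by
          rw [show a * b + a * b' + a' * b - a' * b' = a * (b + b') + a' * (b - b') from by ring]
      _ ≤ |a * (b + b')| + |a' * (b - b')| := abs_add_le _ _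
      _ = |a| * |b + b'| + |a'| * |b - b'| := by rw [abs_mul, abs_mul]
  have h2 : |b + b'| + |b - b'| ≤ 2 := by
    rw [abs_le] at hb hb'
    rcases abs_cases (b + b') with ⟨h, _⟩ | ⟨h, _⟩ <;>
      rcases abs_cases (b - b') with ⟨h', _⟩ | ⟨h', _⟩ <;> linarith
  have h3 : |a| * |b + b'| + |a'| * |b - b'| ≤ |b + b'| + |b - b'| :=
    add_le_add (mul_le_of_le_one_left (abs_nonneg _) ha)
      (mul_le_of_le_one_left (abs_nonneg _) ha')
  linarith

/-- Any dynamical local hidden-variable model (setting-independent `ρ`, local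
transition kernels, normalized local response probabilities, outcomes ±1
indexed by `Bool` via `sgn`) satisfies the CHSH inequality. -/
theorem dynamical_local_model_chsh
    {Λ ΛA' ΛB' X Y : Type*}
    [MeasurableSpace Λ] [MeasurableSpace ΛA'] [MeasurableSpace ΛB']
    (ρ : Measure Λ) [IsProbabilityMeasure ρ]
    (TA : X → Λ → Measure ΛA') (hTA : ∀ x l, IsProbabilityMeasure (TA x l))
    (TB : Y → Λ → Measure ΛB') (hTB : ∀ y l, IsProbabilityMeasure (TB y l))
    (hTAmeas : ∀ x, Measurable (TA x)) (hTBmeas : ∀ y, Measurable (TB y))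
    (PA : Bool → X → Λ → ΛA' → ℝ) (PB : Bool → Y → Λ → ΛB' → ℝ)
    (hPAmeas : ∀ a x, Measurable fun p : Λ × ΛA' => PA a x p.1 p.2)
    (hPBmeas : ∀ b y, Measurable fun p : Λ × ΛB' => PB b y p.1 p.2)
    (hPA0 : ∀ a x l lA', 0 ≤ PA a x l lA') (hPA1 : ∀ a x l lA', PA a x l lA' ≤ 1)
    (hPB0 : ∀ b y l lB', 0 ≤ PB b y l lB') (hPB1 : ∀ b y l lB', PB b y l lB' ≤ 1)
    (hPAsum : ∀ x l lA', PA true x l lA' + PA false x l lA' = 1)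
    (hPBsum : ∀ y l lB', PB true y l lB' + PB false y l lB' = 1)
    (sgn : Bool → ℝ) (hsgn : sgn true = 1 ∧ sgn false = -1)
    (P : Bool → Bool → X → Y → ℝ)
    (hP : ∀ a b x y, P a b x y =
      ∫ l, ∫ lB', ∫ lA', PA a x l lA' * PB b y l lB' ∂(TA x l) ∂(TB y l) ∂ρ)
    (E : X → Y → ℝ)
    (hE : ∀ x y, E x y = ∑ a : Bool, ∑ b : Bool, sgn a * sgn b * P a b x y)
    (x₀ x₁ : X) (y₀ y₁ : Y) :
    |E x₀ y₀ + E x₀ y₁ + E x₁ y₀ - E x₁ y₁| ≤ 2 := by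
  classical
  set fA : Bool → X → Λ → ℝ := fun a x l => ∫ lA', PA a x l lA' ∂(TA x l) with hfA
  set fB : Bool → Y → Λ → ℝ := fun b y l => ∫ lB', PB b y l lB' ∂(TB y l) with hfB
  -- measurability of the averaged responses
  have measA : ∀ (a : Bool) (x : X), Measurable (fA a x) := by
    intro a x
    let κ : ProbabilityTheory.Kernel Λ ΛA' := ⟨TA x, hTAmeas x⟩
    haveI : ProbabilityTheory.IsMarkovKernel κ := ⟨fun l => hTA x l⟩
    exact (StronglyMeasurable.integral_kernel_prod_right
      (κ := κ) (hPAmeas a x).stronglyMeasurable).measurable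
  have measB : ∀ (b : Bool) (y : Y), Measurable (fB b y) := by
    intro b y
    let κ : ProbabilityTheory.Kernel Λ ΛB' := ⟨TB y, hTBmeas y⟩
    haveI : ProbabilityTheory.IsMarkovKernel κ := ⟨fun l => hTB y l⟩
    exact (StronglyMeasurable.integral_kernel_prod_right
      (κ := κ) (hPBmeas b y).stronglyMeasurable).measurable
  -- integrability of the responses against the transition kernels
  have intA : ∀ (a : Bool) (x : X) (l : Λ),
      Integrable (fun lA' => PA a x l lA') (TA x l) := by
    intro a x l
    haveI := hTA x l
    have hm : Measurable fun lA' => PA a x l lA' :=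
      (hPAmeas a x).comp measurable_prodMk_left
    refine (integrable_const (1 : ℝ)).mono' hm.aestronglyMeasurable ?_
    filter_upwards with lA'
    rw [Real.norm_eq_abs, abs_of_nonneg (hPA0 a x l lA')]
    exact hPA1 a x l lA'
  have intB : ∀ (b : Bool) (y : Y) (l : Λ),
      Integrable (fun lB' => PB b y l lB') (TB y l) := by
    intro b y l
    haveI := hTB y l
    have hm : Measurable fun lB' => PB b y l lB' :=
      (hPBmeas b y).comp measurable_prodMk_left
    refine (integrable_const (1 : ℝ)).mono' hm.aestronglyMeasurable ?_
    filter_upwards with lB'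
    rw [Real.norm_eq_abs, abs_of_nonneg (hPB0 b y l lB')]
    exact hPB1 b y l lB'
  -- bounds
  have hA0 : ∀ a x l, 0 ≤ fA a x l := fun a x l =>
    integral_nonneg (hPA0 a x l)
  have hB0 : ∀ b y l, 0 ≤ fB b y l := fun b y l =>
    integral_nonneg (hPB0 b y l)
  have hA1 : ∀ a x l, fA a x l ≤ 1 := by
    intro a x l
    haveI := hTA x l
    calc fA a x l ≤ ∫ _, (1 : ℝ) ∂(TA x l) :=
          integral_mono_of_nonneg (Filter.Eventually.of_forall (hPA0 a x l))
            (integrable_const 1) (Filter.Eventually.of_forall (hPA1 a x l))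
      _ = 1 := by simp
  have hB1 : ∀ b y l, fB b y l ≤ 1 := by
    intro b y l
    haveI := hTB y l
    calc fB b y l ≤ ∫ _, (1 : ℝ) ∂(TB y l) :=
          integral_mono_of_nonneg (Filter.Eventually.of_forall (hPB0 b y l))
            (integrable_const 1) (Filter.Eventually.of_forall (hPB1 b y l))
      _ = 1 := by simp
  have hAsum : ∀ x l, fA true x l + fA false x l = 1 := by
    intro x l
    haveI := hTA x l
    rw [hfA]
    rw [← integral_add (intA true x l) (intA false x l)]
    have : (fun lA' => PA true x l lA' + PA false x l lA') = fun _ => (1 : ℝ) :=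
      funext (hPAsum x l)
    rw [this]; simp
  have hBsum : ∀ y l, fB true y l + fB false y l = 1 := by
    intro y l
    haveI := hTB y l
    rw [hfB]
    rw [← integral_add (intB true y l) (intB false y l)]
    have : (fun lB' => PB true y l lB' + PB false y l lB') = fun _ => (1 : ℝ) :=
      funext (hPBsum y l)
    rw [this]; simp
  -- correlator single-side functions
  set A : X → Λ → ℝ := fun x l => fA true x l - fA false x l with hA
  set B : Y → Λ → ℝ := fun y l => fB true y l - fB false y l with hB
  have hAabs : ∀ x l, |A x l| ≤ 1 := by
    intro x l
    simp only [hA]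
    rw [abs_le]
    constructor <;>
      linarith [hA0 true x l, hA1 true x l, hA0 false x l, hA1 false x l, hAsum x l]
  have hBabs : ∀ y l, |B y l| ≤ 1 := by
    intro y l
    simp only [hB]
    rw [abs_le]
    constructor <;>
      linarith [hB0 true y l, hB1 true y l, hB0 false y l, hB1 false y l, hBsum y l]
  -- P in terms of fA, fB
  have hP' : ∀ a b x y, P a b x y = ∫ l, fA a x l * fB b y l ∂ρ := by
    intro a b x y
    rw [hP]
    simp only [hfA, hfB, integral_mul_const, integral_const_mul]
  -- integrability of products over ρ
  have intAB : ∀ (a b : Bool) (x : X) (y : Y),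
      Integrable (fun l => fA a x l * fB b y l) ρ := by
    intro a b x y
    have hm : Measurable fun l => fA a x l * fB b y l :=
      (measA a x).mul (measB b y)
    refine (integrable_const (1 : ℝ)).mono' hm.aestronglyMeasurable ?_
    filter_upwards with l
    rw [Real.norm_eq_abs, abs_mul]
    calc |fA a x l| * |fB b y l| ≤ 1 * 1 := by
          apply mul_le_mul
          · rw [abs_of_nonneg (hA0 a x l)]; exact hA1 a x l
          · rw [abs_of_nonneg (hB0 b y l)]; exact hB1 b y l
          · exact abs_nonneg _
          · norm_num
      _ = 1 := by norm_num
  -- E in terms of A, B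
  have hE' : ∀ x y, E x y = ∫ l, A x l * B y l ∂ρ := by
    intro x y
    have expand : ∀ l, A x l * B y l =
        fA true x l * fB true y l - fA true x l * fB false y l
          - fA false x l * fB true y l + fA false x l * fB false y l := by
      intro l; rw [hA, hB]; ring
    rw [hE]
    simp only [Fintype.sum_bool, hsgn.1, hsgn.2, hP' _ _ x y]
    simp_rw [expand]
    have i1 : Integrable (fun l => fA true x l * fB true y l
        - fA true x l * fB false y l) ρ :=
      (intAB true true x y).sub (intAB true false x y)
    have i2 : Integrable (fun l => fA true x l * fB true y l
        - fA true x l * fB false y l - fA false x l * fB true y l) ρ :=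
      i1.sub (intAB false true x y)
    rw [integral_add i2 (intAB false false x y), integral_sub i1 (intAB false true x y),
        integral_sub (intAB true true x y) (intAB true false x y)]
    ring
  -- integrability of A * B
  have intAB' : ∀ (x : X) (y : Y), Integrable (fun l => A x l * B y l) ρ := by
    intro x y
    have : (fun l => A x l * B y l) = fun l =>
        fA true x l * fB true y l - fA true x l * fB false y l
          - fA false x l * fB true y l + fA false x l * fB false y l := by
      funext l; rw [hA, hB]; ring
    rw [this]
    exact (((intAB true true x y).sub (intAB true false x y)).sub
      (intAB false true x y)).add (intAB false false x y)
  -- combine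
  have key : E x₀ y₀ + E x₀ y₁ + E x₁ y₀ - E x₁ y₁ =
      ∫ l, (A x₀ l * B y₀ l + A x₀ l * B y₁ l + A x₁ l * B y₀ l
        - A x₁ l * B y₁ l) ∂ρ := by
    have j1 : Integrable (fun l => A x₀ l * B y₀ l + A x₀ l * B y₁ l) ρ :=
      (intAB' x₀ y₀).add (intAB' x₀ y₁)
    have j2 : Integrable (fun l => A x₀ l * B y₀ l + A x₀ l * B y₁ l
        + A x₁ l * B y₀ l) ρ := j1.add (intAB' x₁ y₀)
    rw [hE' x₀ y₀, hE' x₀ y₁, hE' x₁ y₀, hE' x₁ y₁,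
        ← integral_add (intAB' x₀ y₀) (intAB' x₀ y₁),
        ← integral_add j1 (intAB' x₁ y₀),
        ← integral_sub j2 (intAB' x₁ y₁)]
  rw [key, ← Real.norm_eq_abs]
  calc ‖∫ l, (A x₀ l * B y₀ l + A x₀ l * B y₁ l + A x₁ l * B y₀ l
        - A x₁ l * B y₁ l) ∂ρ‖ ≤ 2 * (ρ Set.univ).toReal := by
        apply norm_integral_le_of_norm_le_const
        filter_upwards with l
        rw [Real.norm_eq_abs]
        exact chsh_pointwise (hAabs x₀ l) (hAabs x₁ l) (hBabs y₀ l) (hBabs y₁ l)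
    _ = 2 := by simp
end

section
/- The singlet-state quantum marginals satisfy statistical no-signaling while the quantum correlations admit no static Bell-local representation: for the correlators E(u,v) = −cos(θ_u − θ_v) with the CHSH-optimal angle choice, there exist no probability measure ρ on any measurable space Λ and response functions Q_A, Q_B (normalized, [0,1]-valued) such that E(x_i,y_j) = ∫ A(x_i,λ)B(y_j,λ) dρ(λ) for all i,j ∈ {0,1}, where A, B are the local expectations of Q_A, Q_B. -/
open MeasureTheory Real

/-- The singlet-state quantum correlators with the CHSH-optimal angles admit
no static Bell-local representation. -/
theorem singlet_has_no_static_bell_local_representation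
    (θx θy : Fin 2 → ℝ)
    (hθx : θx 0 = 0 ∧ θx 1 = π / 2)
    (hθy : θy 0 = π / 4 ∧ θy 1 = 3 * π / 4)
    (Eq : Fin 2 → Fin 2 → ℝ)
    (hEq : ∀ i j, Eq i j = -Real.cos (θx i - θy j)) :
    ¬ ∃ (Λ : Type) (_ : MeasurableSpace Λ) (ρ : Measure Λ)
        (_ : IsProbabilityMeasure ρ)
        (QA : Bool → Fin 2 → Λ → ℝ) (QB : Bool → Fin 2 → Λ → ℝ)
        (A : Fin 2 → Λ → ℝ) (B : Fin 2 → Λ → ℝ),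
        (∀ a x, Measurable (QA a x)) ∧ (∀ b y, Measurable (QB b y)) ∧
        (∀ a x l, 0 ≤ QA a x l ∧ QA a x l ≤ 1) ∧
        (∀ b y l, 0 ≤ QB b y l ∧ QB b y l ≤ 1) ∧
        (∀ x l, QA true x l + QA false x l = 1) ∧
        (∀ y l, QB true y l + QB false y l = 1) ∧
        (∀ x l, A x l = QA true x l - QA false x l) ∧
        (∀ y l, B y l = QB true y l - QB false y l) ∧
        (∀ i j, Eq i j = ∫ l, A i l * B j l ∂ρ) := by
  rintro ⟨Λ, mΛ, ρ, hρ, QA, QB, A, B, hQAm, hQBm, hQA01, hQB01, hQAn, hQBn, hA, hB, hrep⟩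
  -- bounds on A and B
  have hAb : ∀ x l, |A x l| ≤ 1 := by
    intro x l
    have h1 := hQA01 true x l; have h2 := hQA01 false x l
    rw [hA, abs_le]; constructor <;> linarith
  have hBb : ∀ y l, |B y l| ≤ 1 := by
    intro y l
    have h1 := hQB01 true y l; have h2 := hQB01 false y l
    rw [hB, abs_le]; constructor <;> linarith
  have hAm : ∀ x, Measurable (A x) := by
    intro x
    have : A x = fun l => QA true x l - QA false x l := funext fun l => hA x l
    rw [this]; exact (hQAm true x).sub (hQAm false x)
  have hBm : ∀ y, Measurable (B y) := by
    intro y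
    have : B y = fun l => QB true y l - QB false y l := funext fun l => hB y l
    rw [this]; exact (hQBm true y).sub (hQBm false y)
  -- integrability of products
  have hint : ∀ i j, Integrable (fun l => A i l * B j l) ρ := by
    intro i j
    refine ⟨((hAm i).mul (hBm j)).aestronglyMeasurable, ?_⟩
    apply MeasureTheory.HasFiniteIntegral.of_bounded (C := 1)
    filter_upwards with l
    rw [Real.norm_eq_abs, abs_mul]
    exact mul_le_one₀ (hAb i l) (abs_nonneg _) (hBb j l)
  -- CHSH quantity
  set g : Λ → ℝ := fun l =>
    A 0 l * B 0 l - A 0 l * B 1 l + A 1 l * B 0 l + A 1 l * B 1 l with hg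
  have hgint : ∫ l, g l ∂ρ =
      Eq 0 0 - Eq 0 1 + Eq 1 0 + Eq 1 1 := by
    have h01 : Integrable (fun l => A 0 l * B 0 l - A 0 l * B 1 l) ρ :=
      (hint 0 0).sub (hint 0 1)
    have h010 : Integrable
        (fun l => A 0 l * B 0 l - A 0 l * B 1 l + A 1 l * B 0 l) ρ :=
      h01.add (hint 1 0)
    rw [hrep 0 0, hrep 0 1, hrep 1 0, hrep 1 1,
        ← integral_sub (hint 0 0) (hint 0 1),
        ← integral_add h01 (hint 1 0),
        ← integral_add h010 (hint 1 1)]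
  have hbound : ‖∫ l, g l ∂ρ‖ ≤ 2 := by
    have := MeasureTheory.norm_integral_le_of_norm_le_const
      (μ := ρ) (f := g) (C := 2) ?_
    · simpa using this
    · filter_upwards with l
      rw [Real.norm_eq_abs]
      have ha0 := abs_le.mp (hAb 0 l)
      have ha1 := abs_le.mp (hAb 1 l)
      have hb0 := abs_le.mp (hBb 0 l)
      have hb1 := abs_le.mp (hBb 1 l)
      have hsplit : |g l| ≤ |B 0 l - B 1 l| + |B 0 l + B 1 l| := by
        have : g l = A 0 l * (B 0 l - B 1 l) + A 1 l * (B 0 l + B 1 l) := by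
          simp only [hg]; ring
        rw [this]
        calc |A 0 l * (B 0 l - B 1 l) + A 1 l * (B 0 l + B 1 l)|
            ≤ |A 0 l * (B 0 l - B 1 l)| + |A 1 l * (B 0 l + B 1 l)| := abs_add_le _ _
          _ ≤ |B 0 l - B 1 l| + |B 0 l + B 1 l| := by
              rw [abs_mul, abs_mul]
              gcongr ?_ + ?_
              · exact mul_le_of_le_one_left (abs_nonneg _) (hAb 0 l)
              · exact mul_le_of_le_one_left (abs_nonneg _) (hAb 1 l)
      have : |B 0 l - B 1 l| + |B 0 l + B 1 l| ≤ 2 := by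
        rcases abs_cases (B 0 l - B 1 l) with ⟨h1, _⟩ | ⟨h1, _⟩ <;>
        rcases abs_cases (B 0 l + B 1 l) with ⟨h2, _⟩ | ⟨h2, _⟩ <;>
        linarith
      linarith
  -- compute the CHSH value
  have hval : Eq 0 0 - Eq 0 1 + Eq 1 0 + Eq 1 1 = -(2 * Real.sqrt 2) := by
    rw [hEq 0 0, hEq 0 1, hEq 1 0, hEq 1 1, hθx.1, hθx.2, hθy.1, hθy.2]
    have h34 : (0 : ℝ) - 3 * π / 4 = -(π - π / 4) := by ring
    have h1 : Real.cos ((0:ℝ) - π / 4) = Real.sqrt 2 / 2 := by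
      rw [zero_sub, Real.cos_neg, Real.cos_pi_div_four]
    have h2 : Real.cos ((0:ℝ) - 3 * π / 4) = -(Real.sqrt 2 / 2) := by
      rw [h34, Real.cos_neg, Real.cos_pi_sub, Real.cos_pi_div_four]
    have h3 : Real.cos (π / 2 - π / 4) = Real.sqrt 2 / 2 := by
      norm_num [Real.cos_pi_div_four, show π / 2 - π / 4 = π / 4 by ring]
    have h4 : Real.cos (π / 2 - 3 * π / 4) = Real.sqrt 2 / 2 := by
      rw [show π / 2 - 3 * π / 4 = -(π / 4) by ring, Real.cos_neg,
        Real.cos_pi_div_four]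
    rw [h1, h2, h3, h4]; ring
  rw [hgint, hval] at hbound
  rw [Real.norm_eq_abs, abs_neg, abs_of_nonneg (by positivity)] at hbound
  have h2 : Real.sqrt 2 ≤ 1 := by linarith
  have : (1 : ℝ) < Real.sqrt 2 := by
    nlinarith [Real.sq_sqrt (by norm_num : (2:ℝ) ≥ 0), Real.sqrt_nonneg 2]
  linarith
end
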